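/- arXiv:1804.05999 — 3 statements merged into one kernel-verified Lean document; each statement's English description precedes it below -/
import Mathlib

section
/- If a 0-1 matrix M avoids the pattern S1 = [[1,0,1,0],[0,1,0,1]] and its horizontal reflection, and row r of M encompasses row s (i.e., r has a one in a column strictly to the left of the leftmost one of s and a one in a column strictly to the right of the rightmost one of s), then r has no one in any column strictly between two columns that both contain ones of s. -/
open Matrix Finset

/-- `P` is contained in `M`: some submatrix of `M` (rows/columns chosen in order)
has ones wherever `P` has ones. -/
def ContainedIn {a b m n : ℕ} (P : Matrix (Fin a) (Fin b) Bool)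
    (M : Matrix (Fin m) (Fin n) Bool) : Prop :=
  ∃ f : Fin a → Fin m, ∃ g : Fin b → Fin n,
    StrictMono f ∧ StrictMono g ∧ ∀ i j, P i j = true → M (f i) (g j) = true

def Avoids {a b m n : ℕ} (M : Matrix (Fin m) (Fin n) Bool)
    (P : Matrix (Fin a) (Fin b) Bool) : Prop :=
  ¬ ContainedIn P M

noncomputable def onesCount {m n : ℕ} (M : Matrix (Fin m) (Fin n) Bool) : ℕ :=
  (Finset.univ.filter (fun p : Fin m × Fin n => M p.1 p.2 = true)).card

open Classical in
/-- `exPat n P` is the maximum number of ones in an `n × n` 0-1 matrix avoiding `P`. -/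
noncomputable def exPat {a b : ℕ} (n : ℕ) (P : Matrix (Fin a) (Fin b) Bool) : ℕ :=
  Finset.sup (Finset.univ.filter (fun M : Matrix (Fin n) (Fin n) Bool => Avoids M P)) onesCount

def LinearEx {a b : ℕ} (P : Matrix (Fin a) (Fin b) Bool) : Prop :=
  ∃ C : ℕ, ∀ n : ℕ, exPat n P ≤ C * n

/-- `P` is minimally non-linear: `exPat n P` is not `O(n)` but every pattern properly
contained in `P` has a linear extremal function. -/
def MinNonLinear {a b : ℕ} (P : Matrix (Fin a) (Fin b) Bool) : Prop :=
  ¬ LinearEx P ∧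
    ∀ (a' b' : ℕ) (P' : Matrix (Fin a') (Fin b') Bool),
      ContainedIn P' P → ¬ ContainedIn P P' → LinearEx P'

def rowRefl {m n : ℕ} (M : Matrix (Fin m) (Fin n) Bool) : Matrix (Fin m) (Fin n) Bool :=
  fun i j => M i.rev j

def colRefl {m n : ℕ} (M : Matrix (Fin m) (Fin n) Bool) : Matrix (Fin m) (Fin n) Bool :=
  fun i j => M i j.rev

def rot90 {m n : ℕ} (M : Matrix (Fin m) (Fin n) Bool) : Matrix (Fin n) (Fin m) Bool :=
  fun i j => M j i.rev

/-- `M` avoids `P` together with its horizontal and vertical reflections. -/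
def AvoidsRefl {a b m n : ℕ} (M : Matrix (Fin m) (Fin n) Bool)
    (P : Matrix (Fin a) (Fin b) Bool) : Prop :=
  Avoids M P ∧ Avoids M (rowRefl P) ∧ Avoids M (colRefl P) ∧ Avoids M (rowRefl (colRefl P))

/-- `M` avoids `P` together with all of its reflections and rotations. -/
def AvoidsD8 {a b m n : ℕ} (M : Matrix (Fin m) (Fin n) Bool)
    (P : Matrix (Fin a) (Fin b) Bool) : Prop :=
  AvoidsRefl M P ∧ AvoidsRefl M (rot90 P)

def S1 : Matrix (Fin 2) (Fin 4) Bool :=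
  !![true, false, true, false; false, true, false, true]

def Q1 : Matrix (Fin 2) (Fin 3) Bool :=
  !![true, false, true; true, true, false]

def Q3 : Matrix (Fin 3) (Fin 3) Bool :=
  !![true, false, true; false, true, false; false, false, true]

def S2 : Matrix (Fin 3) (Fin 4) Bool :=
  !![true, false, false, false; false, false, true, false; false, true, false, true]

def Rpat : Matrix (Fin 2) (Fin 2) Bool := !![true, true; true, true]

/-- Row `r` encompasses row `s`: `r` has a one strictly left of the leftmost one of `s`
and a one strictly right of the rightmost one of `s`. -/
def Encompasses {m n : ℕ} (M : Matrix (Fin m) (Fin n) Bool) (r s : Fin m) : Prop :=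
  (∃ c : Fin n, M r c = true ∧ ∀ c', M s c' = true → c < c') ∧
  (∃ c : Fin n, M r c = true ∧ ∀ c', M s c' = true → c' < c)

noncomputable def rowOnes {m n : ℕ} (M : Matrix (Fin m) (Fin n) Bool) (r : Fin m) : ℕ :=
  (Finset.univ.filter (fun j : Fin n => M r j = true)).card
theorem stmt0 {m n : ℕ} (M : Matrix (Fin m) (Fin n) Bool)
    (h1 : Avoids M S1) (h2 : Avoids M (colRefl S1))
    (r s : Fin m) (henc : Encompasses M r s) :
    ∀ c1 c c2 : Fin n, M s c1 = true → M s c2 = true →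
      c1 < c → c < c2 → M r c = false := by
  intro c1 c c2 hs1 hs2 hc1 hc2
  by_contra hrc
  rw [Bool.not_eq_false] at hrc
  obtain ⟨⟨cL, hrL, hL⟩, _⟩ := henc
  have hLc1 : cL < c1 := hL c1 hs1
  have hg : StrictMono (![cL, c1, c, c2] : Fin 4 → Fin n) := by
    intro a b hab
    fin_cases a <;> fin_cases b <;>
      simp only [Matrix.cons_val_zero, Matrix.cons_val_one, Matrix.head_cons,
        Matrix.cons_val_two, Matrix.tail_cons, Matrix.cons_val_three, Fin.mk_zero,
        Fin.mk_one, Fin.isValue] <;>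
      first
        | exact absurd hab (by decide)
        | exact hLc1
        | exact hc1
        | exact hc2
        | exact hLc1.trans hc1
        | exact hc1.trans hc2
        | exact (hLc1.trans hc1).trans hc2
  rcases lt_trichotomy r s with hrs | hrs | hrs
  · exact h1 ⟨![r, s], ![cL, c1, c, c2], by
      intro a b hab
      fin_cases a <;> fin_cases b <;> simp only [Matrix.cons_val_zero, Matrix.cons_val_one, Matrix.head_cons, Fin.mk_zero, Fin.mk_one, Fin.isValue] <;> first | exact absurd hab (by decide) | exact hrs, hg, by
      intro i j hij
      fin_cases i <;> fin_cases j <;> simp_all [S1]⟩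
  · subst hrs
    exact absurd (hL cL hrL) (lt_irrefl _)
  · exact h2 ⟨![s, r], ![cL, c1, c, c2], by
      intro a b hab
      fin_cases a <;> fin_cases b <;> simp only [Matrix.cons_val_zero, Matrix.cons_val_one, Matrix.head_cons, Fin.mk_zero, Fin.mk_one, Fin.isValue] <;> first | exact absurd hab (by decide) | exact hrs, hg, by
      intro i j hij
      fin_cases i <;> fin_cases j <;> simp_all [colRefl, S1, Fin.rev]⟩
end

section
/- If a 0-1 matrix M avoids S1 = [[1,0,1,0],[0,1,0,1]], Q1 = [[1,0,1],[1,1,0]], and all horizontal and vertical reflections of these patterns, and row s of M has a one in a column strictly between two columns containing ones of row r, then r encompasses s. -/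
open Matrix Finset

lemma sm2' {m : ℕ} {x y : Fin m} (h : x < y) : StrictMono ![x, y] := by
  rw [Fin.strictMono_iff_lt_succ]; intro i; fin_cases i <;> simpa

lemma sm3' {m : ℕ} {x y z : Fin m} (h1 : x < y) (h2 : y < z) : StrictMono ![x, y, z] := by
  rw [Fin.strictMono_iff_lt_succ]; intro i; fin_cases i <;> simpa

lemma sm4' {m : ℕ} {x y z w : Fin m} (h1 : x < y) (h2 : y < z) (h3 : z < w) :
    StrictMono ![x, y, z, w] := by
  rw [Fin.strictMono_iff_lt_succ]; intro i; fin_cases i <;> simpa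

lemma contain2x3' {m n : ℕ} {M : Matrix (Fin m) (Fin n) Bool} {r s : Fin m} {a b c : Fin n}
    (P : Matrix (Fin 2) (Fin 3) Bool) (hrs : r < s) (hab : a < b) (hbc : b < c)
    (h : ∀ i j, P i j = true → M (![r, s] i) (![a, b, c] j) = true) :
    ContainedIn P M :=
  ⟨![r, s], ![a, b, c], sm2' hrs, sm3' hab hbc, h⟩

lemma contain2x4' {m n : ℕ} {M : Matrix (Fin m) (Fin n) Bool} {r s : Fin m} {a b c d : Fin n}
    (P : Matrix (Fin 2) (Fin 4) Bool) (hrs : r < s) (hab : a < b) (hbc : b < c) (hcd : c < d)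
    (h : ∀ i j, P i j = true → M (![r, s] i) (![a, b, c, d] j) = true) :
    ContainedIn P M :=
  ⟨![r, s], ![a, b, c, d], sm2' hrs, sm4' hab hbc hcd, h⟩

theorem stmt1 {m n : ℕ} (M : Matrix (Fin m) (Fin n) Bool)
    (hS1 : AvoidsRefl M S1) (hQ1 : AvoidsRefl M Q1)
    (r s : Fin m) (hrs : r ≠ s)
    (h : ∃ c1 c c2 : Fin n, M r c1 = true ∧ M r c2 = true ∧ M s c = true ∧
      c1 < c ∧ c < c2) :
    Encompasses M r s := by
  obtain ⟨c1, c, c2, h1, h2, hsc, hc1, hc2⟩ := h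
  have eS1c : colRefl S1 = !![false, true, false, true; true, false, true, false] := by decide
  have eQ1r : rowRefl Q1 = !![true, true, false; true, false, true] := by decide
  have eQ1c : colRefl Q1 = !![true, false, true; false, true, true] := by decide
  have eQ1rc : rowRefl (colRefl Q1) = !![false, true, true; true, false, true] := by decide
  constructor
  · by_contra hL
    push_neg at hL
    obtain ⟨c', hc', hle⟩ := hL c1 h1
    rcases lt_or_eq_of_le hle with hlt | heq
    · rcases hrs.lt_or_gt with hrlt | hslt
      · have key := hS1.2.2.1
        rw [eS1c] at key
        exact key (contain2x4' _ hrlt hlt hc1 hc2 (by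
          intro i j hij; fin_cases i <;> fin_cases j <;> simp_all))
      · exact hS1.1 (contain2x4' _ hslt hlt hc1 hc2 (by
          intro i j hij; fin_cases i <;> fin_cases j <;> simp_all [S1]))
    · subst heq
      rcases hrs.lt_or_gt with hrlt | hslt
      · exact hQ1.1 (contain2x3' _ hrlt hc1 hc2 (by
          intro i j hij; fin_cases i <;> fin_cases j <;> simp_all [Q1]))
      · have key := hQ1.2.1
        rw [eQ1r] at key
        exact key (contain2x3' _ hslt hc1 hc2 (by
          intro i j hij; fin_cases i <;> fin_cases j <;> simp_all))
  · by_contra hR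
    push_neg at hR
    obtain ⟨c', hc', hle⟩ := hR c2 h2
    rcases lt_or_eq_of_le hle with hlt | heq
    · rcases hrs.lt_or_gt with hrlt | hslt
      · exact hS1.1 (contain2x4' _ hrlt hc1 hc2 hlt (by
          intro i j hij; fin_cases i <;> fin_cases j <;> simp_all [S1]))
      · have key := hS1.2.2.1
        rw [eS1c] at key
        exact key (contain2x4' _ hslt hc1 hc2 hlt (by
          intro i j hij; fin_cases i <;> fin_cases j <;> simp_all))
    · subst heq
      rcases hrs.lt_or_gt with hrlt | hslt
      · have key := hQ1.2.2.1
        rw [eQ1c] at key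
        exact key (contain2x3' _ hrlt hc1 hc2 (by
          intro i j hij; fin_cases i <;> fin_cases j <;> simp_all))
      · have key := hQ1.2.2.2
        rw [eQ1rc] at key
        exact key (contain2x3' _ hslt hc1 hc2 (by
          intro i j hij; fin_cases i <;> fin_cases j <;> simp_all))
end

section
/- Cross lemma: Let M be a 0-1 matrix avoiding S1, S2, Q1, Q3, and all of their reflections and rotations. If there are column indices c1 < c2 < c3 and row indices r1 < r2 < r3 with M(r1,c2) = M(r3,c2) = M(r2,c1) = M(r2,c3) = 1, then M(y,x) = 0 whenever x <= c1 or x >= c3, and simultaneously y <= r1 or y >= r3, excluding the four given ones themselves. -/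
open Matrix Finset

lemma sm2 {k:ℕ} {a b : Fin k} (h : a < b) : StrictMono ![a,b] := by
  intro i j hij; fin_cases i <;> fin_cases j <;> simp_all

lemma sm3 {k:ℕ} {a b c : Fin k} (h1 : a < b) (h2 : b < c) : StrictMono ![a,b,c] := by
  intro i j hij; fin_cases i <;> fin_cases j <;> simp_all <;> exact lt_trans h1 h2

lemma sm4 {k:ℕ} {a b c d : Fin k} (h1 : a < b) (h2 : b < c) (h3 : c < d) :
    StrictMono ![a,b,c,d] := by
  intro i j hij; fin_cases i <;> fin_cases j <;> simp_all <;>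
    first
    | exact lt_trans h1 h2
    | exact lt_trans h2 h3
    | exact lt_trans h1 (lt_trans h2 h3)

theorem stmt4 {m n : ℕ} (M : Matrix (Fin m) (Fin n) Bool)
    (h1 : AvoidsD8 M S1) (h2 : AvoidsD8 M S2) (h3 : AvoidsD8 M Q1) (h4 : AvoidsD8 M Q3)
    (c1 c2 c3 : Fin n) (r1 r2 r3 : Fin m)
    (hc12 : c1 < c2) (hc23 : c2 < c3) (hr12 : r1 < r2) (hr23 : r2 < r3)
    (e1 : M r1 c2 = true) (e2 : M r3 c2 = true) (e3 : M r2 c1 = true) (e4 : M r2 c3 = true)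
    (y : Fin m) (x : Fin n)
    (hx : x ≤ c1 ∨ c3 ≤ x) (hy : y ≤ r1 ∨ r3 ≤ y)
    (hne : ¬ ((y = r1 ∧ x = c2) ∨ (y = r3 ∧ x = c2) ∨
              (y = r2 ∧ x = c1) ∨ (y = r2 ∧ x = c3))) :
    M y x = false := by
  by_contra hM
  rw [Bool.not_eq_false] at hM
  clear hne
  rcases hx with hx | hx <;> rcases hy with hy | hy
  · -- top-left quadrant: x ≤ c1, y ≤ r1
    rcases lt_or_eq_of_le hx with hx' | hx' <;> rcases lt_or_eq_of_le hy with hy' | hy'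
    · -- x < c1, y < r1 : S2
      exact h2.1.1 ⟨![y,r1,r2], ![x,c1,c2,c3], sm3 hy' hr12, sm4 hx' hc12 hc23,
        by intro i j hP; fin_cases i <;> fin_cases j <;> simp_all [S2] <;>
          simp_all [Matrix.vecHead, Matrix.vecTail]⟩
    · -- x < c1, y = r1 : S1
      rw [hy'] at hM
      exact h1.1.1 ⟨![r1,r2], ![x,c1,c2,c3], sm2 hr12, sm4 hx' hc12 hc23,
        by intro i j hP; fin_cases i <;> fin_cases j <;> simp_all [S1] <;>
          simp_all [Matrix.vecHead, Matrix.vecTail]⟩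
    · -- x = c1, y < r1 : rowRefl (colRefl Q3)
      rw [hx'] at hM
      exact h4.1.2.2.2 ⟨![y,r1,r2], ![c1,c2,c3], sm3 hy' hr12, sm3 hc12 hc23,
        by intro i j hP; fin_cases i <;> fin_cases j <;>
          simp_all [Q3, rowRefl, colRefl, Fin.rev] <;>
          simp_all [Matrix.vecHead, Matrix.vecTail]⟩
    · -- x = c1, y = r1 : rowRefl Q1
      rw [hx', hy'] at hM
      exact h3.1.2.1 ⟨![r1,r2], ![c1,c2,c3], sm2 hr12, sm3 hc12 hc23,
        by intro i j hP; fin_cases i <;> fin_cases j <;>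
          simp_all [Q1, rowRefl, Fin.rev] <;>
          simp_all [Matrix.vecHead, Matrix.vecTail]⟩
  · -- bottom-left: x ≤ c1, r3 ≤ y
    rcases lt_or_eq_of_le hx with hx' | hx' <;> rcases lt_or_eq_of_le hy with hy' | hy'
    · -- x < c1, r3 < y : rowRefl S2
      exact h2.1.2.1 ⟨![r2,r3,y], ![x,c1,c2,c3], sm3 hr23 hy', sm4 hx' hc12 hc23,
        by intro i j hP; fin_cases i <;> fin_cases j <;>
          simp_all [S2, rowRefl, Fin.rev] <;>
          simp_all [Matrix.vecHead, Matrix.vecTail]⟩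
    · -- x < c1, y = r3 : rowRefl S1
      rw [hy'] at e2
      exact h1.1.2.1 ⟨![r2,y], ![x,c1,c2,c3], hy' ▸ sm2 hr23, sm4 hx' hc12 hc23,
        by intro i j hP; fin_cases i <;> fin_cases j <;>
          simp_all [S1, rowRefl, Fin.rev] <;>
          simp_all [Matrix.vecHead, Matrix.vecTail]⟩
    · -- x = c1, r3 < y : colRefl Q3
      rw [hx'] at hM
      exact h4.1.2.2.1 ⟨![r2,r3,y], ![c1,c2,c3], sm3 hr23 hy', sm3 hc12 hc23,
        by intro i j hP; fin_cases i <;> fin_cases j <;>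
          simp_all [Q3, colRefl, Fin.rev] <;>
          simp_all [Matrix.vecHead, Matrix.vecTail]⟩
    · -- x = c1, y = r3 : Q1
      rw [hx'] at hM; rw [hy'] at e2
      exact h3.1.1 ⟨![r2,y], ![c1,c2,c3], hy' ▸ sm2 hr23, sm3 hc12 hc23,
        by intro i j hP; fin_cases i <;> fin_cases j <;>
          simp_all [Q1] <;>
          simp_all [Matrix.vecHead, Matrix.vecTail]⟩
  · -- top-right: c3 ≤ x, y ≤ r1
    rcases lt_or_eq_of_le hx with hx' | hx' <;> rcases lt_or_eq_of_le hy with hy' | hy'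
    · -- c3 < x, y < r1 : colRefl S2
      exact h2.1.2.2.1 ⟨![y,r1,r2], ![c1,c2,c3,x], sm3 hy' hr12, sm4 hc12 hc23 hx',
        by intro i j hP; fin_cases i <;> fin_cases j <;>
          simp_all [S2, colRefl, Fin.rev] <;>
          simp_all [Matrix.vecHead, Matrix.vecTail]⟩
    · -- c3 < x, y = r1 : colRefl S1
      rw [hy'] at hM
      exact h1.1.2.2.1 ⟨![r1,r2], ![c1,c2,c3,x], sm2 hr12, sm4 hc12 hc23 hx',
        by intro i j hP; fin_cases i <;> fin_cases j <;>
          simp_all [S1, colRefl, Fin.rev] <;>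
          simp_all [Matrix.vecHead, Matrix.vecTail]⟩
    · -- x = c3, y < r1 : rowRefl Q3
      rw [hx'] at e4
      exact h4.1.2.1 ⟨![y,r1,r2], ![c1,c2,x], sm3 hy' hr12, hx' ▸ sm3 hc12 hc23,
        by intro i j hP; fin_cases i <;> fin_cases j <;>
          simp_all [Q3, rowRefl, Fin.rev] <;>
          simp_all [Matrix.vecHead, Matrix.vecTail]⟩
    · -- x = c3, y = r1 : rowRefl (colRefl Q1)
      rw [hy'] at hM; rw [hx'] at e4
      exact h3.1.2.2.2 ⟨![r1,r2], ![c1,c2,x], sm2 hr12, hx' ▸ sm3 hc12 hc23,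
        by intro i j hP; fin_cases i <;> fin_cases j <;>
          simp_all [Q1, rowRefl, colRefl, Fin.rev] <;>
          simp_all [Matrix.vecHead, Matrix.vecTail]⟩
  · -- bottom-right: c3 ≤ x, r3 ≤ y
    rcases lt_or_eq_of_le hx with hx' | hx' <;> rcases lt_or_eq_of_le hy with hy' | hy'
    · -- c3 < x, r3 < y : rowRefl (colRefl S2)
      exact h2.1.2.2.2 ⟨![r2,r3,y], ![c1,c2,c3,x], sm3 hr23 hy', sm4 hc12 hc23 hx',
        by intro i j hP; fin_cases i <;> fin_cases j <;>
          simp_all [S2, rowRefl, colRefl, Fin.rev] <;>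
          simp_all [Matrix.vecHead, Matrix.vecTail]⟩
    · -- c3 < x, y = r3 : S1
      rw [hy'] at e2
      exact h1.1.1 ⟨![r2,y], ![c1,c2,c3,x], hy' ▸ sm2 hr23, sm4 hc12 hc23 hx',
        by intro i j hP; fin_cases i <;> fin_cases j <;>
          simp_all [S1] <;>
          simp_all [Matrix.vecHead, Matrix.vecTail]⟩
    · -- x = c3, r3 < y : Q3
      rw [hx'] at e4
      exact h4.1.1 ⟨![r2,r3,y], ![c1,c2,x], sm3 hr23 hy', hx' ▸ sm3 hc12 hc23,
        by intro i j hP; fin_cases i <;> fin_cases j <;>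
          simp_all [Q3] <;>
          simp_all [Matrix.vecHead, Matrix.vecTail]⟩
    · -- x = c3, y = r3 : colRefl Q1
      rw [hx'] at e4; rw [hy'] at e2
      exact h3.1.2.2.1 ⟨![r2,y], ![c1,c2,x], hy' ▸ sm2 hr23, hx' ▸ sm3 hc12 hc23,
        by intro i j hP; fin_cases i <;> fin_cases j <;>
          simp_all [Q1, colRefl, Fin.rev] <;>
          simp_all [Matrix.vecHead, Matrix.vecTail]⟩
end
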